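/- arXiv:1108.1410 — 6 statements merged into one kernel-verified Lean document; each statement's English description precedes it below -/
import Mathlib

section
/- Let G be a connected simple undirected graph on N ≥ 2 vertices with Laplacian L, let b0 > 0 and a ≥ b0·λN(L), and set α_k = b0/(a+k). Let m ∈ ℝ^N and define the sequence μ(1) = m, μ(k+1) = (k/(k+1))·(I − α_k L)·μ(k) + (1/(k+1))·m for k ≥ 1. Then μ(k) → (I + b0·L)^{−1} m as k → ∞. -/
/-!
Put `μ* = (I + b0 L)⁻¹ m`, so that `m = μ* + b0 L μ*`. The error `e k = μ k - μ*` then satisfies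
`e (k+1) = (k/(k+1)) (I - α_k L) e k + (1/(k+1)) r k` with `r k = (b0 a/(a+k)) L μ* → 0`.
A diagonal entry of `L` is at most `λ_N`, so `α_k deg v ≤ α_k λ_N ≤ 1` and `I - α_k L` is
row-stochastic, hence nonexpansive in the sup norm. Therefore
`(k+1) ‖e (k+1)‖ ≤ k ‖e k‖ + ‖r k‖`, and `‖e k‖` is dominated by `‖e 1‖ / k` plus a Cesàro mean
of the `‖r j‖`, which tends to `0`.
-/

open Filter Matrix

/-- The eigenvalues of a Hermitian real matrix, sorted in increasing order:
`sortedEigs L hL ⟨0,_⟩ = λ₁(L) ≤ … ≤ sortedEigs L hL ⟨N-1,_⟩ = λ_N(L)`. -/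
noncomputable def sortedEigs {N : ℕ} (L : Matrix (Fin N) (Fin N) ℝ) (hL : L.IsHermitian) :
    Fin N → ℝ :=
  hL.eigenvalues ∘ Tuple.sort hL.eigenvalues

open scoped MatrixOrder Topology

lemma Matrix.IsHermitian.diag_le_of_forall_eigenvalues_le {n : Type*} [Fintype n]
    [DecidableEq n] {A : Matrix n n ℝ} (hA : A.IsHermitian) {r : ℝ}
    (h : ∀ j, hA.eigenvalues j ≤ r) (i : n) : A i i ≤ r := by
  have hle : A ≤ algebraMap ℝ _ r := by
    rw [le_algebraMap_iff_spectrum_le (ha := hA.isSelfAdjoint),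
      hA.spectrum_real_eq_range_eigenvalues]
    rintro _ ⟨j, rfl⟩
    exact h j
  simpa [algebraMap_eq_diagonal, sub_nonneg] using (Matrix.le_iff.mp hle).diag_nonneg (i := i)

lemma eigenvalues_le_sortedEigs_last {N : ℕ} {L : Matrix (Fin N) (Fin N) ℝ} (hL : L.IsHermitian)
    (hN : 0 < N) (i : Fin N) : hL.eigenvalues i ≤ sortedEigs L hL ⟨N - 1, by omega⟩ := by
  have hi : hL.eigenvalues i = sortedEigs L hL ((Tuple.sort hL.eigenvalues)⁻¹ i) := by
    simp [sortedEigs]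
  rw [hi]
  exact Tuple.monotone_sort hL.eigenvalues (Fin.le_def.2 (Nat.le_sub_one_of_lt (Fin.is_lt _)))

lemma Matrix.norm_mulVec_le_of_mem_rowStochastic {n : Type*} [Fintype n] [DecidableEq n]
    {M : Matrix n n ℝ} (hM : M ∈ rowStochastic ℝ n) (v : n → ℝ) : ‖M *ᵥ v‖ ≤ ‖v‖ := by
  refine (pi_norm_le_iff_of_nonneg (norm_nonneg v)).2 fun i ↦ ?_
  calc ‖(M *ᵥ v) i‖ = ‖∑ j, M i j * v j‖ := rfl
    _ ≤ ∑ j, M i j * ‖v‖ := by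
      refine (norm_sum_le _ _).trans (Finset.sum_le_sum fun j _ ↦ ?_)
      rw [norm_mul, Real.norm_of_nonneg (nonneg_of_mem_rowStochastic hM)]
      exact mul_le_mul_of_nonneg_left (norm_le_pi_norm v j) (nonneg_of_mem_rowStochastic hM)
    _ = ‖v‖ := by rw [← Finset.sum_mul, sum_row_of_mem_rowStochastic hM, one_mul]

lemma SimpleGraph.one_sub_smul_lapMatrix_mem_rowStochastic {V : Type*} [Fintype V]
    [DecidableEq V] (G : SimpleGraph V) [DecidableRel G.Adj] {c : ℝ} (hc : 0 ≤ c)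
    (hdeg : ∀ v, c * G.degree v ≤ 1) : 1 - c • G.lapMatrix ℝ ∈ rowStochastic ℝ V := by
  refine mem_rowStochastic.2 ⟨fun i j ↦ ?_, ?_⟩
  · rcases eq_or_ne i j with rfl | hij
    · simpa [lapMatrix, degMatrix] using hdeg i
    · simp only [lapMatrix, degMatrix, Matrix.sub_apply, one_apply_ne hij, Matrix.smul_apply,
        diagonal_apply_ne _ hij, adjMatrix_apply, zero_sub, smul_eq_mul, mul_neg, mul_ite,
        mul_one, mul_zero, neg_neg]
      positivity
  · rw [sub_mulVec, one_mulVec, smul_mulVec,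
      show G.lapMatrix ℝ *ᵥ 1 = 0 from G.lapMatrix_mulVec_const_eq_zero, smul_zero, sub_zero]

lemma tendsto_zero_of_succ_mul_le {y δ : ℕ → ℝ} (hy : ∀ k, 0 ≤ y k) (hδ : ∀ k, 0 ≤ δ k)
    (hδlim : Tendsto δ atTop (𝓝 0))
    (h : ∀ k : ℕ, 1 ≤ k → (k + 1) * y (k + 1) ≤ k * y k + δ k) :
    Tendsto y atTop (𝓝 0) := by
  have hbound : ∀ k : ℕ, 1 ≤ k → k * y k ≤ y 1 + ∑ j ∈ Finset.range k, δ j := by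
    intro k hk
    induction k, hk using Nat.le_induction with
    | base => simpa using hδ 0
    | succ k hk ih =>
      rw [Finset.sum_range_succ]
      push_cast
      linarith [h k hk]
  have hupper : Tendsto (fun k : ℕ ↦ y 1 / k + (k : ℝ)⁻¹ * ∑ j ∈ Finset.range k, δ j)
      atTop (𝓝 0) := by
    simpa using (tendsto_const_div_atTop_nhds_zero_nat (y 1)).add hδlim.cesaro
  refine tendsto_of_tendsto_of_tendsto_of_le_of_le' tendsto_const_nhds hupper
    (Eventually.of_forall hy) ?_
  filter_upwards [eventually_ge_atTop 1] with k hk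
  have hk0 : (0 : ℝ) < k := by exact_mod_cast hk
  calc y k ≤ (y 1 + ∑ j ∈ Finset.range k, δ j) / k := by
        rw [le_div_iff₀ hk0]
        linarith [hbound k hk]
    _ = _ := by rw [add_div, inv_mul_eq_div]

lemma tendsto_zero_of_averaged_nonexpansive {E : Type*} [SeminormedAddCommGroup E]
    [NormedSpace ℝ E] {x r : ℕ → E} (T : ℕ → E → E) (hT : ∀ k v, ‖T k v‖ ≤ ‖v‖)
    (hr : Tendsto r atTop (𝓝 0))
    (h : ∀ k : ℕ, 1 ≤ k →
      x (k + 1) = ((k : ℝ) / (k + 1)) • T k (x k) + (1 / ((k : ℝ) + 1)) • r k) :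
    Tendsto x atTop (𝓝 0) := by
  rw [tendsto_zero_iff_norm_tendsto_zero] at hr ⊢
  refine tendsto_zero_of_succ_mul_le (fun _ ↦ norm_nonneg _) (fun _ ↦ norm_nonneg _) hr
    fun k hk ↦ ?_
  have hk1 : (0 : ℝ) < k + 1 := by positivity
  have hx : ((k : ℝ) + 1) • x (k + 1) = (k : ℝ) • T k (x k) + r k := by
    rw [h k hk, smul_add, smul_smul, smul_smul, mul_div_cancel₀ _ hk1.ne',
      mul_one_div_cancel hk1.ne', one_smul]
  calc (k + 1) * ‖x (k + 1)‖ = ‖((k : ℝ) + 1) • x (k + 1)‖ := by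
        rw [norm_smul, Real.norm_of_nonneg hk1.le]
    _ ≤ k * ‖T k (x k)‖ + ‖r k‖ := by
        rw [hx]
        refine (norm_add_le _ _).trans ?_
        rw [norm_smul, Real.norm_natCast]
    _ ≤ k * ‖x k‖ + ‖r k‖ := by gcongr; exact hT k (x k)

/-- Convergence of the mean recursion of the consensus+innovations detector:
with `α_k = b0/(a+k)`, `a ≥ b0·λ_N(L)`, the sequence
`μ(k+1) = (k/(k+1))(I − α_k L)μ(k) + (1/(k+1))m` converges to `(I + b0·L)⁻¹ m`. -/
theorem mean_recursion_limit (N : ℕ) (hN : 2 ≤ N) (G : SimpleGraph (Fin N))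
    [DecidableRel G.Adj] (b0 a : ℝ) (hb0 : 0 < b0)
    (ha : b0 * sortedEigs (G.lapMatrix ℝ)
        (SimpleGraph.posSemidef_lapMatrix ℝ G).1 ⟨N - 1, by omega⟩ ≤ a)
    (m : Fin N → ℝ) (μ : ℕ → Fin N → ℝ)
    (hrec : ∀ k : ℕ, 1 ≤ k →
      μ (k + 1) = ((k : ℝ) / ((k : ℝ) + 1)) •
          ((1 - (b0 / (a + (k : ℝ))) • G.lapMatrix ℝ).mulVec (μ k)) +
        ((1 : ℝ) / ((k : ℝ) + 1)) • m) :
    Tendsto μ atTop (nhds ((1 + b0 • G.lapMatrix ℝ)⁻¹.mulVec m)) := by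
  set L := G.lapMatrix ℝ
  set lmax := sortedEigs L (SimpleGraph.posSemidef_lapMatrix ℝ G).1 ⟨N - 1, by omega⟩
  have hL : L.PosSemidef := SimpleGraph.posSemidef_lapMatrix ℝ G
  have heig : ∀ i, hL.1.eigenvalues i ≤ lmax := eigenvalues_le_sortedEigs_last hL.1 (by omega)
  have hdeg : ∀ v, (G.degree v : ℝ) ≤ lmax := fun v ↦ by
    simpa [L, SimpleGraph.lapMatrix, SimpleGraph.degMatrix] using
      hL.1.diag_le_of_forall_eigenvalues_le heig v
  have ha0 : 0 ≤ a :=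
    (mul_nonneg hb0.le ((hL.eigenvalues_nonneg ⟨0, by omega⟩).trans (heig _))).trans ha
  set ms := (1 + b0 • L)⁻¹ *ᵥ m
  have hm : m = ms + b0 • (L *ᵥ ms) := by
    have hB : IsUnit (1 + b0 • L).det :=
      (isUnit_iff_isUnit_det _).mp (PosDef.one.add_posSemidef (hL.smul hb0.le)).isUnit
    have hBms : (1 + b0 • L) *ᵥ ms = m := by rw [mulVec_mulVec, mul_nonsing_inv _ hB, one_mulVec]
    rwa [add_mulVec, one_mulVec, smul_mulVec, eq_comm] at hBms
  have hstep : ∀ k : ℕ, 1 - (b0 / (a + k)) • L ∈ rowStochastic ℝ (Fin N) := fun k ↦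
    G.one_sub_smul_lapMatrix_mem_rowStochastic (by positivity) fun v ↦ by
      rw [div_mul_eq_mul_div]
      refine div_le_one_of_le₀ ?_ (by positivity)
      calc b0 * G.degree v ≤ b0 * lmax := mul_le_mul_of_nonneg_left (hdeg v) hb0.le
        _ ≤ a + k := ha.trans (le_add_of_nonneg_right k.cast_nonneg)
  have hr : Tendsto (fun k : ℕ ↦ (b0 * a / (a + k)) • (L *ᵥ ms)) atTop (𝓝 0) := by
    have : Tendsto (fun k : ℕ ↦ b0 * a / (a + k)) atTop (𝓝 0) :=
      tendsto_const_nhds.div_atTop (tendsto_atTop_add_const_left _ _ tendsto_natCast_atTop_atTop)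
    simpa using this.smul_const (L *ᵥ ms)
  have herr : ∀ k : ℕ, 1 ≤ k → μ (k + 1) - ms =
      ((k : ℝ) / (k + 1)) • ((1 - (b0 / (a + k)) • L) *ᵥ (μ k - ms)) +
        (1 / ((k : ℝ) + 1)) • ((b0 * a / (a + k)) • (L *ᵥ ms)) := by
    intro k hk
    have hk1 : (k : ℝ) + 1 ≠ 0 := by positivity
    have hak : a + k ≠ 0 := by positivity
    rw [hrec k hk, hm]
    simp only [mulVec_sub, sub_mulVec, one_mulVec, smul_mulVec]
    match_scalars <;> field_simp <;> ring
  rw [← tendsto_sub_nhds_zero_iff]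
  exact tendsto_zero_of_averaged_nonexpansive _
    (fun k ↦ norm_mulVec_le_of_mem_rowStochastic (hstep k)) hr herr
end

section
/- Let G be a connected simple undirected graph on N ≥ 2 vertices with Laplacian L, let b0 > 0, and let m ∈ ℝ^N. Then for every coordinate i, |[(I + b0·L)^{−1} m]_i − (1/N)·∑_{j=1}^N m_j| ≤ ‖m‖ / (1 + b0·λ2(L)), where ‖·‖ is the Euclidean norm. -/
/-!
Put `ā := (1/N) ∑ m_j` and `y := (I + b₀L)⁻¹ m - ā·𝟙`. Since `L𝟙 = 0` and `𝟙ᵀL = 0`, the vector `y`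
has mean zero and `(I + b₀L) y = m - ā·𝟙`. For a connected graph the only eigenvector of `L` with
eigenvalue below `λ₂` spans the constants, so `yᵀLy ≥ λ₂ ‖y‖²` on mean-zero vectors, whence
`‖(I + b₀L) y‖ ≥ (1 + b₀λ₂) ‖y‖` by Cauchy–Schwarz. Finally `|y_i| ≤ ‖y‖` and `‖m - ā·𝟙‖ ≤ ‖m‖`.
-/

open Filter Matrix

namespace Matrix.IsHermitian

variable {n : Type*} [Fintype n] [DecidableEq n] {A : Matrix n n ℝ} (hA : A.IsHermitian)

lemma sum_dotProduct_smul_eigenvectorBasis (y : n → ℝ) :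
    ∑ k, (⇑(hA.eigenvectorBasis k) ⬝ᵥ y) • ⇑(hA.eigenvectorBasis k) = y := by
  have h := congrArg WithLp.ofLp (hA.eigenvectorBasis.sum_repr' (WithLp.toLp 2 y))
  simpa [EuclideanSpace.inner_eq_star_dotProduct, dotProduct_comm] using h

lemma mul_dotProduct_self_le_dotProduct_mulVec {c : ℝ} {y : n → ℝ}
    (hy : ∀ k, hA.eigenvalues k < c → ⇑(hA.eigenvectorBasis k) ⬝ᵥ y = 0) :
    c * (y ⬝ᵥ y) ≤ y ⬝ᵥ (A *ᵥ y) := by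
  set z : n → ℝ := fun k => ⇑(hA.eigenvectorBasis k) ⬝ᵥ y
  have hrepr := hA.sum_dotProduct_smul_eigenvectorBasis y
  have hself : y ⬝ᵥ y = ∑ k, z k ^ 2 := by
    nth_rw 1 [← hrepr]
    simp only [sum_dotProduct, smul_dotProduct, smul_eq_mul, z, sq]
  have hquad : y ⬝ᵥ (A *ᵥ y) = ∑ k, hA.eigenvalues k * z k ^ 2 := by
    rw [dotProduct_comm]
    nth_rw 1 [← hrepr]
    simp only [mulVec_sum, mulVec_smul, mulVec_eigenvectorBasis, sum_dotProduct, smul_dotProduct,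
      smul_eq_mul, z]
    exact Finset.sum_congr rfl fun k _ => by ring
  rw [hself, hquad, Finset.mul_sum]
  refine Finset.sum_le_sum fun k _ => ?_
  rcases lt_or_ge (hA.eigenvalues k) c with hk | hk
  · simp [z, hy k hk]
  · exact mul_le_mul_of_nonneg_right hk (sq_nonneg _)

end Matrix.IsHermitian

lemma Tuple.le_of_lt_comp_sort_one {α : Type*} [LinearOrder α] {n : ℕ} (hn : 1 < n)
    (f : Fin n → α) {k : Fin n} (hk : f k < f (Tuple.sort f ⟨1, hn⟩)) (j : Fin n) :
    f k ≤ f j := by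
  have hmono := Tuple.monotone_sort f
  have hk0 : ((Tuple.sort f).symm k : ℕ) = 0 := by
    by_contra h
    have hle : (⟨1, hn⟩ : Fin n) ≤ (Tuple.sort f).symm k := Fin.le_def.2 (show 1 ≤ _ by omega)
    exact (show f (Tuple.sort f ⟨1, hn⟩) ≤ f k by simpa using hmono hle).not_gt hk
  have hle : (Tuple.sort f).symm k ≤ (Tuple.sort f).symm j := Fin.le_def.2 (by omega)
  simpa using hmono hle

lemma Matrix.PosSemidef.sortedEigs_nonneg {N : ℕ} {L : Matrix (Fin N) (Fin N) ℝ}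
    (hL : L.PosSemidef) (k : Fin N) : 0 ≤ sortedEigs L hL.1 k :=
  hL.eigenvalues_nonneg _

lemma Matrix.dotProduct_sq_le_dotProduct_self_mul {n : Type*} [Fintype n] (x y : n → ℝ) :
    (x ⬝ᵥ y) ^ 2 ≤ (x ⬝ᵥ x) * (y ⬝ᵥ y) := by
  simpa only [dotProduct, sq] using Finset.sum_mul_sq_le_sq_mul_sq Finset.univ x y

lemma Matrix.sq_mul_dotProduct_self_le_of_le_dotProduct_mulVec {n : Type*} [Fintype n]
    [DecidableEq n] {L : Matrix n n ℝ} {b c : ℝ} (hb : 0 ≤ b) (hc : 0 ≤ 1 + b * c)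
    {y : n → ℝ} (hy : c * (y ⬝ᵥ y) ≤ y ⬝ᵥ (L *ᵥ y)) :
    (1 + b * c) ^ 2 * (y ⬝ᵥ y) ≤ ((1 + b • L) *ᵥ y) ⬝ᵥ ((1 + b • L) *ᵥ y) := by
  set w := (1 + b • L) *ᵥ y
  have hyw : (1 + b * c) * (y ⬝ᵥ y) ≤ y ⬝ᵥ w := by
    simp only [w, add_mulVec, one_mulVec, smul_mulVec, dotProduct_add, dotProduct_smul,
      smul_eq_mul]
    nlinarith
  have hcs := dotProduct_sq_le_dotProduct_self_mul y w
  have hyy : 0 ≤ y ⬝ᵥ y := Finset.sum_nonneg fun i _ ↦ mul_self_nonneg (y i)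
  rcases hyy.eq_or_lt with h0 | hpos
  · rw [← h0, mul_zero]
    exact Finset.sum_nonneg fun i _ ↦ mul_self_nonneg (w i)
  · nlinarith [mul_nonneg hc hyy]

lemma Fintype.sum_sub_mean_eq_zero {ι : Type*} [Fintype ι] (m : ι → ℝ) :
    ∑ j, (m j - (∑ k, m k) / Fintype.card ι) = 0 := by
  rcases isEmpty_or_nonempty ι with hι | hι
  · simp
  have hcard : (Fintype.card ι : ℝ) ≠ 0 := by positivity
  simp only [Finset.sum_sub_distrib, Finset.sum_const, Finset.card_univ, nsmul_eq_mul]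
  field_simp
  ring

lemma Fintype.sum_sub_mean_sq_le {ι : Type*} [Fintype ι] (m : ι → ℝ) :
    ∑ j, (m j - (∑ k, m k) / Fintype.card ι) ^ 2 ≤ ∑ j, m j ^ 2 := by
  rcases isEmpty_or_nonempty ι with hι | hι
  · simp
  have hcard : (Fintype.card ι : ℝ) ≠ 0 := by positivity
  have hexpand : ∑ j, (m j - (∑ k, m k) / Fintype.card ι) ^ 2 =
      ∑ j, m j ^ 2 - (∑ k, m k) ^ 2 / Fintype.card ι := by
    simp only [sub_sq, Finset.sum_add_distrib, Finset.sum_sub_distrib, ← Finset.sum_mul,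
      ← Finset.mul_sum, Finset.sum_const, Finset.card_univ, nsmul_eq_mul]
    field_simp
    ring
  rw [hexpand, sub_le_self_iff]
  positivity

namespace SimpleGraph

section

variable {V : Type*} [Fintype V] [DecidableEq V] (G : SimpleGraph V) [DecidableRel G.Adj]

lemma sum_lapMatrix_mulVec {R : Type*} [CommRing R] (x : V → R) :
    ∑ v, (G.lapMatrix R *ᵥ x) v = 0 := by
  calc ∑ v, (G.lapMatrix R *ᵥ x) v = (fun _ ↦ 1) ⬝ᵥ (G.lapMatrix R *ᵥ x) := by
        simp [dotProduct]
    _ = (G.lapMatrix R *ᵥ fun _ ↦ 1) ⬝ᵥ x := by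
        rw [dotProduct_mulVec, ← vecMul_transpose, (G.isSymm_lapMatrix (R := R)).eq]
    _ = 0 := by rw [lapMatrix_mulVec_const_eq_zero, zero_dotProduct]

lemma sum_one_add_smul_lapMatrix_mulVec {R : Type*} [CommRing R] (b : R) (x : V → R) :
    ∑ v, ((1 + b • G.lapMatrix R) *ᵥ x) v = ∑ v, x v := by
  simp [add_mulVec, Finset.sum_add_distrib, smul_mulVec, ← Finset.mul_sum, sum_lapMatrix_mulVec]

lemma lapMatrix_mulVec_const {R : Type*} [CommRing R] (a : R) :
    G.lapMatrix R *ᵥ (fun _ ↦ a) = 0 := by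
  have hconst : (fun _ : V ↦ a) = a • fun _ ↦ 1 := by ext; simp
  rw [hconst, mulVec_smul, lapMatrix_mulVec_const_eq_zero, smul_zero]

lemma isUnit_det_one_add_smul_lapMatrix {b : ℝ} (hb : 0 ≤ b) :
    IsUnit (1 + b • G.lapMatrix ℝ).det :=
  (isUnit_iff_isUnit_det _).1
    (PosDef.one.add_posSemidef ((G.posSemidef_lapMatrix ℝ).smul hb)).isUnit

end

section

variable {N : ℕ} (G : SimpleGraph (Fin N)) [DecidableRel G.Adj]

lemma eigenvectorBasis_lapMatrix_dotProduct_eq_zero (hconn : G.Connected) (hN : 1 < N)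
    {k : Fin N} (hk : (G.isHermitian_lapMatrix ℝ).eigenvalues k <
      sortedEigs (G.lapMatrix ℝ) (G.isHermitian_lapMatrix ℝ) ⟨1, hN⟩)
    {y : Fin N → ℝ} (hy : ∑ j, y j = 0) :
    ⇑((G.isHermitian_lapMatrix ℝ).eigenvectorBasis k) ⬝ᵥ y = 0 := by
  set hL := G.isHermitian_lapMatrix ℝ
  set u := ⇑(hL.eigenvectorBasis k)
  have : NeZero N := ⟨by omega⟩
  obtain ⟨j, hj⟩ : ∃ j, hL.eigenvalues j = 0 := by
    simpa [hL.det_eq_prod_eigenvalues, Finset.prod_eq_zero_iff] using G.det_lapMatrix_eq_zero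
  have hk0 : hL.eigenvalues k = 0 :=
    le_antisymm (hj ▸ Tuple.le_of_lt_comp_sort_one hN _ hk j)
      ((G.posSemidef_lapMatrix ℝ).eigenvalues_nonneg k)
  have hu : G.lapMatrix ℝ *ᵥ u = 0 := by
    rw [hL.mulVec_eigenvectorBasis, hk0, zero_smul]
  have hconst : ∀ v, u v = u 0 := fun v ↦
    (G.lapMatrix_mulVec_eq_zero_iff_forall_reachable.1 hu) v 0 (hconn.preconnected v 0)
  simp [dotProduct, hconst, ← Finset.mul_sum, hy]

lemma sortedEigs_one_mul_dotProduct_self_le (hconn : G.Connected) (hN : 1 < N)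
    {y : Fin N → ℝ} (hy : ∑ j, y j = 0) :
    sortedEigs (G.lapMatrix ℝ) (G.isHermitian_lapMatrix ℝ) ⟨1, hN⟩ * (y ⬝ᵥ y) ≤
      y ⬝ᵥ (G.lapMatrix ℝ *ᵥ y) :=
  (G.isHermitian_lapMatrix ℝ).mul_dotProduct_self_le_dotProduct_mulVec fun _ hk ↦
    G.eigenvectorBasis_lapMatrix_dotProduct_eq_zero hconn hN hk hy

end

end SimpleGraph

/-- Each entry of `(I + b0·L)⁻¹ m` deviates from the average `(1/N)·∑ m_j` by at most
`‖m‖/(1 + b0·λ₂(L))`, where `λ₂(L)` is the algebraic connectivity. -/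
theorem limit_mean_deviation_bound (N : ℕ) (hN : 2 ≤ N) (G : SimpleGraph (Fin N))
    [DecidableRel G.Adj] (hconn : G.Connected) (b0 : ℝ) (hb0 : 0 < b0)
    (m : Fin N → ℝ) (i : Fin N) :
    |((1 + b0 • G.lapMatrix ℝ)⁻¹.mulVec m) i - (1 / (N : ℝ)) * ∑ j, m j| ≤
      Real.sqrt (∑ j, m j ^ 2) /
        (1 + b0 * sortedEigs (G.lapMatrix ℝ)
          (SimpleGraph.posSemidef_lapMatrix ℝ G).1 ⟨1, by omega⟩) := by
  set L := G.lapMatrix ℝ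
  set s := 1 + b0 * sortedEigs L (G.posSemidef_lapMatrix ℝ).1 ⟨1, by omega⟩
  set a := (1 / (N : ℝ)) * ∑ j, m j
  set w : Fin N → ℝ := m - fun _ ↦ a
  set y : Fin N → ℝ := (1 + b0 • L)⁻¹ *ᵥ m - fun _ ↦ a
  have hs : 0 < s := add_pos_of_pos_of_nonneg one_pos
    (mul_nonneg hb0.le ((G.posSemidef_lapMatrix ℝ).sortedEigs_nonneg _))
  have hAy : (1 + b0 • L) *ᵥ y = w := by
    simp only [y, w, mulVec_sub, mulVec_mulVec,
      mul_nonsing_inv _ (G.isUnit_det_one_add_smul_lapMatrix hb0.le), one_mulVec, add_mulVec,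
      smul_mulVec, L, G.lapMatrix_mulVec_const, smul_zero, add_zero]
  have ha : a = (∑ k, m k) / Fintype.card (Fin N) := by simp [a, div_eq_inv_mul]
  have hy : ∑ j, y j = 0 := by
    rw [← G.sum_one_add_smul_lapMatrix_mulVec b0, hAy]
    simpa [w, ha] using Fintype.sum_sub_mean_eq_zero m
  have hyw : s ^ 2 * (y ⬝ᵥ y) ≤ w ⬝ᵥ w := hAy ▸
    sq_mul_dotProduct_self_le_of_le_dotProduct_mulVec hb0.le hs.le
      (G.sortedEigs_one_mul_dotProduct_self_le hconn (by omega) hy)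
  have hwm : w ⬝ᵥ w ≤ ∑ j, m j ^ 2 := by
    simpa [w, ha, dotProduct, sq] using Fintype.sum_sub_mean_sq_le m
  have hyi : y i ^ 2 ≤ y ⬝ᵥ y := by
    simpa [dotProduct, sq] using
      Finset.single_le_sum (fun j _ ↦ mul_self_nonneg (y j)) (Finset.mem_univ i)
  rw [le_div_iff₀ hs, ← abs_of_pos hs, ← abs_mul]
  apply Real.abs_le_sqrt
  have : (y i * s) ^ 2 ≤ s ^ 2 * (y ⬝ᵥ y) := by nlinarith
  simpa [y] using this.trans (hyw.trans hwm)
end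

section
/- Let L be a symmetric positive semidefinite N×N real matrix and let a, b0 > 0. Define, for each integer k ≥ 1, Γ(k) = I − (k+1)·(I + b0·L)^{−1} + k·(I − (b0/(a+k))·L)·(I + b0·L)^{−1}. Then every eigenvector q of L with eigenvalue λ is an eigenvector of Γ(k) with eigenvalue a·b0·λ/((1 + b0·λ)(a + k)), and consequently there exists c > 0 such that the spectral norm satisfies ‖Γ(k)‖ ≤ c/k for all k ≥ 1. -/
/-!
Writing `M = I + b0 L`, which is invertible because `L` is positive semidefinite, the identity
`I - M⁻¹ = b0 L M⁻¹` collapses `Γ(k)` to the single matrix `(a b0 / (a + k)) • L M⁻¹`.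
On an eigenvector of `L` with eigenvalue `λ`, `M⁻¹` acts as `(1 + b0 λ)⁻¹`, which gives the
eigenvalue; and the spectral norm of `Γ(k)` is `a b0 ‖L M⁻¹‖ / (a + k) ≤ a b0 ‖L M⁻¹‖ / k`.
-/

open Matrix

/-- The spectral (ℓ₂-operator) norm of a real square matrix. -/
noncomputable def specNorm {N : ℕ} (A : Matrix (Fin N) (Fin N) ℝ) : ℝ :=
  ‖Matrix.toEuclideanCLM (𝕜 := ℝ) A‖

namespace Matrix

variable {n : Type*} [Fintype n] [DecidableEq n]

open scoped ComplexOrder in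
theorem isUnit_one_add_smul_of_posSemidef {𝕜 : Type*} [RCLike 𝕜] {L : Matrix n n 𝕜}
    (hL : L.PosSemidef) {b : ℝ} (hb : 0 ≤ b) : IsUnit (1 + b • L) :=
  (PosDef.one.add_posSemidef (hL.smul hb)).isUnit

variable {K : Type*} [Field K]

theorem inv_mulVec_eq_inv_smul_of_mulVec_eq_smul {A : Matrix n n K} (hA : IsUnit A)
    {q : n → K} (hq : q ≠ 0) {μ : K} (h : A *ᵥ q = μ • q) : A⁻¹ *ᵥ q = μ⁻¹ • q := by
  have hdet := (isUnit_iff_isUnit_det A).1 hA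
  have hμ : μ ≠ 0 := by
    rintro rfl
    exact hq (eq_zero_of_mulVec_eq_zero hdet.ne_zero (by rw [h, zero_smul]))
  rw [eq_inv_smul_iff₀ hμ, ← mulVec_smul, ← h, mulVec_mulVec, nonsing_inv_mul A hdet, one_mulVec]

theorem mul_inv_one_add_smul_mulVec_of_mulVec_eq_smul {L : Matrix n n K} {b : K}
    (h : IsUnit (1 + b • L)) {q : n → K} (hq : q ≠ 0) {lam : K} (hLq : L *ᵥ q = lam • q) :
    (L * (1 + b • L)⁻¹) *ᵥ q = (lam / (1 + b * lam)) • q := by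
  have hMq : (1 + b • L) *ᵥ q = (1 + b * lam) • q := by
    rw [add_mulVec, one_mulVec, smul_mulVec, hLq, smul_smul, add_smul, one_smul]
  rw [← mulVec_mulVec, inv_mulVec_eq_inv_smul_of_mulVec_eq_smul h hq hMq, mulVec_smul, hLq,
    smul_smul, div_eq_inv_mul]

theorem one_sub_inv_one_add_smul {L : Matrix n n K} {b : K} (h : IsUnit (1 + b • L)) :
    1 - (1 + b • L)⁻¹ = b • (L * (1 + b • L)⁻¹) := by
  nth_rewrite 1 [← mul_nonsing_inv (1 + b • L) ((isUnit_iff_isUnit_det _).1 h)]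
  rw [add_mul, one_mul, smul_mul_assoc, add_sub_cancel_left]

end Matrix

section Perturbation

variable {n : Type*} [Fintype n] [DecidableEq n] {K : Type*} [Field K]

/-- The paper's `Γ(k)`, with `k` allowed to be any scalar. -/
noncomputable def perturbationMatrix (L : Matrix n n K) (a b k : K) : Matrix n n K :=
  1 - (k + 1) • (1 + b • L)⁻¹ + k • ((1 - (b / (a + k)) • L) * (1 + b • L)⁻¹)

theorem perturbationMatrix_eq_smul_mul_inv {L : Matrix n n K} {a b k : K}
    (hL : IsUnit (1 + b • L)) (hak : a + k ≠ 0) :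
    perturbationMatrix L a b k = (a * b / (a + k)) • (L * (1 + b • L)⁻¹) := by
  calc perturbationMatrix L a b k
      = (1 - (1 + b • L)⁻¹) - (k * (b / (a + k))) • (L * (1 + b • L)⁻¹) := by
        rw [perturbationMatrix, sub_mul, one_mul, smul_mul_assoc]
        module
    _ = (a * b / (a + k)) • (L * (1 + b • L)⁻¹) := by
        rw [one_sub_inv_one_add_smul hL, ← sub_smul]
        congr 1
        field_simp
        ring

end Perturbation

theorem specNorm_smul {N : ℕ} (r : ℝ) (A : Matrix (Fin N) (Fin N) ℝ) :
    specNorm (r • A) = |r| * specNorm A := by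
  rw [specNorm, map_smul, norm_smul, Real.norm_eq_abs, specNorm]

/-- The perturbation matrix `Γ(k) = I − (k+1)(I+b0·L)⁻¹ + k(I − (b0/(a+k))L)(I+b0·L)⁻¹`
has the same eigenvectors as `L`, with eigenvalue `a·b0·λ/((1+b0·λ)(a+k))` on an
eigenvector of `L` with eigenvalue `λ`; consequently `‖Γ(k)‖ ≤ c/k` for some `c > 0`. -/
theorem gamma_eigen_and_norm_bound (N : ℕ) (L : Matrix (Fin N) (Fin N) ℝ)
    (hL : L.PosSemidef) (a b0 : ℝ) (ha : 0 < a) (hb0 : 0 < b0)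
    (Γ : ℕ → Matrix (Fin N) (Fin N) ℝ)
    (hΓ : ∀ k : ℕ, Γ k =
      1 - ((k : ℝ) + 1) • (1 + b0 • L)⁻¹ +
        (k : ℝ) • ((1 - (b0 / (a + (k : ℝ))) • L) * (1 + b0 • L)⁻¹)) :
    (∀ (k : ℕ) (q : Fin N → ℝ) (lam : ℝ), q ≠ 0 → L.mulVec q = lam • q →
      (Γ k).mulVec q = (a * b0 * lam / ((1 + b0 * lam) * (a + (k : ℝ)))) • q) ∧
    ∃ c : ℝ, 0 < c ∧ ∀ k : ℕ, 1 ≤ k → specNorm (Γ k) ≤ c / (k : ℝ) := by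
  have hM := isUnit_one_add_smul_of_posSemidef hL hb0.le
  have hΓ_smul (k : ℕ) : Γ k = (a * b0 / (a + k)) • (L * (1 + b0 • L)⁻¹) :=
    (hΓ k).trans (perturbationMatrix_eq_smul_mul_inv hM (by positivity))
  refine ⟨fun k q lam hq hLq => ?_, ?_⟩
  · rw [hΓ_smul k, smul_mulVec, mul_inv_one_add_smul_mulVec_of_mulVec_eq_smul hM hq hLq, smul_smul,
      div_mul_div_comm, mul_comm (a + _)]
  · set C := specNorm (L * (1 + b0 • L)⁻¹)
    have hC : 0 ≤ C := norm_nonneg _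
    refine ⟨a * b0 * C + 1, by positivity, fun k hk => ?_⟩
    have hk0 : (0 : ℝ) < k := by exact_mod_cast hk
    calc specNorm (Γ k) = a * b0 * C / (a + k) := by
          rw [hΓ_smul k, specNorm_smul, abs_of_pos (by positivity), div_mul_eq_mul_div]
      _ ≤ a * b0 * C / k := by gcongr; linarith
      _ ≤ (a * b0 * C + 1) / k := by gcongr; linarith
end

section
/- Let a ≥ b > 0 and define, for integers k ≥ 1, Z(k) = (1/k)·∑_{j=1}^k ∏_{s=j}^{k−1} (1 − b/(a+s)), where the empty product for j = k equals 1. Then limsup_{k→∞} Z(k) ≤ 1/(1+b). -/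
open Filter Topology Finset

/-!
Write `S k = ∑_{j=1}^k ∏_{s=j}^{k-1} f s`, so that `Z k = S k / k`. Peeling off the factor `f k`
gives the recursion `S (k+1) = f k · S k + 1`. With `f s = 1 - b/(a+s)` the affine sequence
`(a + k)/(1 + b)` is an exact solution of this recursion, and it dominates `S` by induction
since `f k ≥ 0` (this is where `a ≥ b` enters). Hence `Z k ≤ (a + k)/(k (1 + b)) → 1/(1 + b)`.
-/

def sumProdTail {R : Type*} [CommSemiring R] (f : ℕ → R) (k : ℕ) : R :=
  ∑ j ∈ Icc 1 k, ∏ s ∈ Icc j (k - 1), f s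

section CommSemiring

variable {R : Type*} [CommSemiring R] (f : ℕ → R)

theorem sumProdTail_zero : sumProdTail f 0 = 0 := rfl

theorem sumProdTail_succ (k : ℕ) : sumProdTail f (k + 1) = sumProdTail f k * f k + 1 := by
  rw [sumProdTail, sumProdTail, Nat.add_sub_cancel, sum_Icc_succ_top (by omega),
    Icc_eq_empty_of_lt (lt_add_one k), prod_empty, sum_mul]
  congr 1
  refine sum_congr rfl fun j hj => ?_
  obtain ⟨m, rfl⟩ : ∃ m, k = m + 1 := ⟨k - 1, by grind⟩
  rw [Nat.add_sub_cancel, prod_Icc_succ_top (by grind)]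

end CommSemiring

theorem sumProdTail_nonneg {f : ℕ → ℝ} (hf : ∀ s, 0 ≤ f s) (k : ℕ) : 0 ≤ sumProdTail f k :=
  sum_nonneg fun _ _ => prod_nonneg fun s _ => hf s

section

variable {a b : ℝ}

theorem one_sub_div_add_nonneg (hb : 0 < b) (hab : b ≤ a) (s : ℕ) : 0 ≤ 1 - b / (a + s) := by
  have hs : (0 : ℝ) ≤ s := s.cast_nonneg
  rw [sub_nonneg, div_le_one (by linarith)]
  linarith

theorem sumProdTail_one_sub_div_le (hb : 0 < b) (hab : b ≤ a) (k : ℕ) :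
    sumProdTail (fun s : ℕ => 1 - b / (a + s)) k ≤ (a + k) / (1 + b) := by
  have ha : 0 < a := hb.trans_le hab
  induction k with
  | zero => rw [sumProdTail_zero]; positivity
  | succ k ih =>
    have hpos : 0 < a + k := by positivity
    rw [sumProdTail_succ]
    calc _ ≤ (a + k) / (1 + b) * (1 - b / (a + k)) + 1 := by
          gcongr
          exact one_sub_div_add_nonneg hb hab k
      _ = (a + (k + 1 : ℕ)) / (1 + b) := by
          push_cast
          field_simp
          ring

end

theorem limsup_le_of_eventually_le_of_tendsto {α β : Type*} [ConditionallyCompleteLinearOrder α]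
    [TopologicalSpace α] [OrderTopology α] {l : Filter β} [l.NeBot] {u v : β → α} {L : α}
    (hu : IsBoundedUnder (· ≥ ·) l u) (huv : u ≤ᶠ[l] v) (hv : Tendsto v l (𝓝 L)) :
    limsup u l ≤ L :=
  (limsup_le_limsup huv hu.isCoboundedUnder_le hv.isBoundedUnder_le).trans_eq hv.limsup_eq

/-- For `a ≥ b > 0`, the averaged products `Z(k) = (1/k)·∑_{j=1}^k ∏_{s=j}^{k−1}(1 − b/(a+s))`
satisfy `limsup_{k→∞} Z(k) ≤ 1/(1+b)`. -/
theorem limsup_avg_products_le (a b : ℝ) (hb : 0 < b) (hab : b ≤ a) :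
    limsup (fun k : ℕ =>
        (1 / (k : ℝ)) * ∑ j ∈ Finset.Icc 1 k,
          ∏ s ∈ Finset.Icc j (k - 1), (1 - b / (a + (s : ℝ)))) atTop ≤ 1 / (1 + b) := by
  set f : ℕ → ℝ := fun s => 1 - b / (a + s)
  change limsup (fun k : ℕ => 1 / (k : ℝ) * sumProdTail f k) atTop ≤ _
  have hbound : ∀ᶠ k : ℕ in atTop,
      1 / (k : ℝ) * sumProdTail f k ≤ (a * (1 / k) + 1) * (1 / (1 + b)) := by
    filter_upwards [eventually_ne_atTop 0] with k hk
    calc _ ≤ 1 / (k : ℝ) * ((a + k) / (1 + b)) := by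
          gcongr
          exact sumProdTail_one_sub_div_le hb hab k
      _ = _ := by field_simp
  have hlim : Tendsto (fun k : ℕ => (a * (1 / (k : ℝ)) + 1) * (1 / (1 + b))) atTop
      (𝓝 ((a * 0 + 1) * (1 / (1 + b)))) :=
    ((tendsto_one_div_atTop_nhds_zero_nat.const_mul a).add_const 1).mul_const _
  refine limsup_le_of_eventually_le_of_tendsto ?_ hbound (by simpa using hlim)
  exact isBoundedUnder_of_eventually_ge <| .of_forall fun k =>
    mul_nonneg (by positivity) (sumProdTail_nonneg (one_sub_div_add_nonneg hb hab) k)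
end

section
/- Let λ > 0, b0 > 0, a ≥ b0·λ, τ ≥ 0, and β_s = b0/(a + s^τ). Define Z_β(k) = (1/k)·∑_{j=1}^k ∏_{s=j}^k (1 − λ·β_s)². Then: (i) if 0 ≤ τ < 1, lim_{k→∞} Z_β(k) = 0; (ii) if τ > 1, lim_{k→∞} Z_β(k) = 1; (iii) if τ = 1, liminf_{k→∞} Z_β(k) ≥ 1/(1 + 2·b0·λ). -/
/-!
Write `g s = (1 - c / (a + s ^ τ)) ^ 2` with `c = b0 λ` and `S k = ∑_{j=1}^k ∏_{s=j}^k g s`, so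
that `Z k = S k / k` and `S (k + 1) = g (k + 1) (S k + 1)`.
* `τ < 1`: as `g s ≤ 1 - c / A s` with `A s = a + s ^ τ` nondecreasing, this recursion keeps
  `S k ≤ A k / c = o(k)`.
* `τ > 1`: `∑ (1 - g s) < ∞`, so by the Weierstrass product inequality each product
  `∏_{s=j}^k g s` is at least `1 - T j`, where `T j` is the tail of that series from `j`; the
  Cesàro means of `T` tend to `0`.
* `τ = 1`: `g s ≥ 1 - 2c / (a + s)`, and the recursion keeps `S k ≥ (k - 2c) / (1 + 2c)`.
-/

open Filter Finset Topology

theorem Finset.one_sub_sum_le_prod_one_sub {ι R : Type*} [LinearOrder ι] [CommRing R]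
    [LinearOrder R] [IsStrictOrderedRing R] (s : Finset ι) {f : ι → R}
    (hf0 : ∀ i ∈ s, 0 ≤ f i) (hf1 : ∀ i ∈ s, f i ≤ 1) :
    1 - ∑ i ∈ s, f i ≤ ∏ i ∈ s, (1 - f i) := by
  rw [prod_one_sub_ordered]
  gcongr with i hi
  refine mul_le_of_le_one_right (hf0 i hi) (prod_le_one (fun j hj => ?_) fun j hj => ?_)
  · exact sub_nonneg.2 (hf1 j (mem_filter.1 hj).1)
  · exact sub_le_self _ (hf0 j (mem_filter.1 hj).1)

theorem sum_Icc_le_tsum_nat_add {f : ℕ → ℝ} (hf : Summable f) (hf0 : ∀ n, 0 ≤ f n)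
    (j k : ℕ) :
    ∑ s ∈ Icc j k, f s ≤ ∑' n, f (n + j) := by
  rw [← Ico_add_one_right_eq_Icc, sum_Ico_eq_sum_range]
  simp_rw [add_comm j]
  exact ((summable_nat_add_iff j).2 hf).sum_le_tsum _ fun n _ => hf0 _

theorem Finset.sum_Icc_one_eq_sum_range {M : Type*} [AddCommMonoid M] (f : ℕ → M) (k : ℕ) :
    ∑ j ∈ Icc 1 k, f j = ∑ i ∈ range k, f (i + 1) := by
  rw [← Ico_add_one_right_eq_Icc, sum_Ico_eq_sum_range]
  simp_rw [add_comm 1, Nat.add_sub_cancel]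

noncomputable def tailProdSum (g : ℕ → ℝ) (k : ℕ) : ℝ :=
  ∑ j ∈ Icc 1 k, ∏ s ∈ Icc j k, g s

section TailProdSum

variable {g : ℕ → ℝ}

@[simp] theorem tailProdSum_zero (g : ℕ → ℝ) : tailProdSum g 0 = 0 := by simp [tailProdSum]

theorem tailProdSum_succ (g : ℕ → ℝ) (k : ℕ) :
    tailProdSum g (k + 1) = g (k + 1) * (tailProdSum g k + 1) := by
  rw [tailProdSum, sum_Icc_succ_top (Nat.le_add_left 1 k), Icc_self, prod_singleton,
    sum_congr rfl fun j hj => prod_Icc_succ_top ((mem_Icc.1 hj).2.trans k.le_succ) g,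
    ← sum_mul, tailProdSum]
  ring

theorem tailProdSum_nonneg (hg0 : ∀ s, 0 ≤ g s) (k : ℕ) : 0 ≤ tailProdSum g k :=
  sum_nonneg fun _ _ => prod_nonneg fun s _ => hg0 s

theorem tailProdSum_le_natCast (hg0 : ∀ s, 0 ≤ g s) (hg1 : ∀ s, g s ≤ 1) (k : ℕ) :
    tailProdSum g k ≤ k :=
  calc tailProdSum g k ≤ ∑ _j ∈ Icc 1 k, (1 : ℝ) :=
        sum_le_sum fun _ _ => prod_le_one (fun s _ => hg0 s) fun s _ => hg1 s
    _ = k := by simp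

theorem tailProdSum_le_div_of_le_one_sub_div {A : ℕ → ℝ} {c : ℝ} (hc : 0 < c) (hA : Monotone A)
    (hA0 : 0 < A 0) (hg0 : ∀ s, 0 ≤ g s) (hg : ∀ s, g s ≤ 1 - c / A s) (k : ℕ) :
    tailProdSum g k ≤ A k / c := by
  induction k with
  | zero => rw [tailProdSum_zero]; positivity
  | succ k ih =>
    have hA' : 0 < A (k + 1) := hA0.trans_le (hA k.succ.zero_le)
    have hfac : 0 ≤ 1 - c / A (k + 1) := (hg0 _).trans (hg _)
    have hS : 0 ≤ tailProdSum g k + 1 := by linarith [tailProdSum_nonneg hg0 k]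
    calc tailProdSum g (k + 1) = g (k + 1) * (tailProdSum g k + 1) := tailProdSum_succ g k
      _ ≤ (1 - c / A (k + 1)) * (A (k + 1) / c + 1) := by
          gcongr
          · exact hg _
          · exact ih.trans (div_le_div_of_nonneg_right (hA k.le_succ) hc.le)
      _ = A (k + 1) / c - c / A (k + 1) := by field_simp; ring
      _ ≤ A (k + 1) / c := sub_le_self _ (by positivity)

theorem div_le_tailProdSum_of_one_sub_div_le {a d : ℝ} (ha : 0 ≤ a) (hd : 0 ≤ d)
    (hg0 : ∀ s, 0 ≤ g s) (hg : ∀ s : ℕ, 1 - d / (a + s) ≤ g s) (k : ℕ) :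
    (k - d) / (1 + d) ≤ tailProdSum g k := by
  induction k with
  | zero =>
    rw [tailProdSum_zero]
    exact div_nonpos_of_nonpos_of_nonneg (by simpa) (by positivity)
  | succ k ih =>
    have hS : 0 ≤ tailProdSum g k + 1 := by linarith [tailProdSum_nonneg hg0 k]
    have hgk := hg (k + 1)
    rw [tailProdSum_succ]
    push_cast at hgk ⊢
    rcases lt_or_ge (a + (k + 1)) d with hsmall | hlarge
    · -- then `k + 1 < d`, so the claimed bound is negative
      exact (div_nonpos_of_nonpos_of_nonneg (by linarith) (by positivity)).trans
        (mul_nonneg (hg0 _) hS)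
    · have hpos : 0 < a + (k + 1) := by positivity
      have hfac : 0 ≤ 1 - d / (a + (k + 1)) := by rwa [sub_nonneg, div_le_one hpos]
      calc ((k : ℝ) + 1 - d) / (1 + d)
          ≤ (1 - d / (a + (k + 1))) * ((k - d) / (1 + d) + 1) := by
            rw [← sub_nonneg]
            have : (1 - d / (a + (k + 1))) * ((k - d) / (1 + d) + 1) - (k + 1 - d) / (1 + d)
                = d / (1 + d) * (a / (a + (k + 1))) := by
              field_simp; ring
            rw [this]; positivity
        _ ≤ (1 - d / (a + (k + 1))) * (tailProdSum g k + 1) := by gcongr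
        _ ≤ g (k + 1) * (tailProdSum g k + 1) := by gcongr

theorem tendsto_tailProdSum_div_self_of_summable (hg0 : ∀ s, 0 ≤ g s) (hg1 : ∀ s, g s ≤ 1)
    (hsum : Summable fun s => 1 - g s) :
    Tendsto (fun k : ℕ => tailProdSum g k / k) atTop (𝓝 1) := by
  set T : ℕ → ℝ := fun j => ∑' n, (1 - g (n + j))
  have hprod : ∀ j k, 1 - T j ≤ ∏ s ∈ Icc j k, g s := fun j k =>
    calc 1 - T j ≤ 1 - ∑ s ∈ Icc j k, (1 - g s) :=
          sub_le_sub_left (sum_Icc_le_tsum_nat_add hsum (fun s => sub_nonneg.2 (hg1 s)) j k) 1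
      _ ≤ ∏ s ∈ Icc j k, (1 - (1 - g s)) :=
          one_sub_sum_le_prod_one_sub _ (fun s _ => sub_nonneg.2 (hg1 s))
            fun s _ => sub_le_self _ (hg0 s)
      _ = ∏ s ∈ Icc j k, g s := by simp
  have hcesaro :
      Tendsto (fun k : ℕ => 1 - (k : ℝ)⁻¹ * ∑ i ∈ range k, T (i + 1)) atTop (𝓝 1) := by
    simpa using tendsto_const_nhds.sub
      ((tendsto_sum_nat_add fun n => 1 - g n).comp (tendsto_add_atTop_nat 1)).cesaro
  refine tendsto_of_tendsto_of_tendsto_of_le_of_le' hcesaro tendsto_const_nhds ?_ ?_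
  all_goals filter_upwards [eventually_gt_atTop 0] with k hk
  · have hk' : (0 : ℝ) < k := by exact_mod_cast hk
    calc 1 - (k : ℝ)⁻¹ * ∑ i ∈ range k, T (i + 1)
        = (∑ j ∈ Icc 1 k, (1 - T j)) / k := by
          rw [sum_Icc_one_eq_sum_range, sum_sub_distrib]; field_simp; simp
      _ ≤ tailProdSum g k / k := by gcongr; exact sum_le_sum fun j _ => hprod j k
  · exact div_le_one_of_le₀ (tailProdSum_le_natCast hg0 hg1 k) k.cast_nonneg

end TailProdSum

theorem one_sub_div_mem_Icc {c x : ℝ} (hc : 0 < c) (hx : c ≤ x) : 1 - c / x ∈ Set.Icc 0 1 :=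
  ⟨sub_nonneg.2 (div_le_one_of_le₀ hx (hc.le.trans hx)),
    sub_le_self _ (div_nonneg hc.le (hc.le.trans hx))⟩

section Weights

variable {c a τ : ℝ}

theorem le_add_rpow (hca : c ≤ a) (s : ℕ) : c ≤ a + (s : ℝ) ^ τ :=
  hca.trans (le_add_of_nonneg_right (Real.rpow_nonneg s.cast_nonneg τ))

theorem tendsto_tailProdSum_div_zero (hc : 0 < c) (hca : c ≤ a) (hτ0 : 0 ≤ τ) (hτ1 : τ < 1) :
    Tendsto (fun k : ℕ => tailProdSum (fun s => (1 - c / (a + (s : ℝ) ^ τ)) ^ 2) k / k)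
      atTop (𝓝 0) := by
  have hmono : Monotone fun s : ℕ => a + (s : ℝ) ^ τ := fun m n hmn => by
    dsimp only; gcongr
  have hfac := fun s => one_sub_div_mem_Icc hc (le_add_rpow (τ := τ) hca s)
  have hbound := tailProdSum_le_div_of_le_one_sub_div hc hmono
    (hc.trans_le (le_add_rpow hca 0)) (fun s => sq_nonneg _)
    fun s => pow_le_of_le_one (hfac s).1 (hfac s).2 two_ne_zero
  have hlim : Tendsto (fun k : ℕ => (a + (k : ℝ) ^ τ) / c / k) atTop (𝓝 0) := by
    have hpow : Tendsto (fun k : ℕ => (k : ℝ) ^ (τ - 1)) atTop (𝓝 0) := by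
      simpa [neg_sub, Function.comp_def] using
        (tendsto_rpow_neg_atTop (sub_pos.2 hτ1)).comp tendsto_natCast_atTop_atTop
    have h := ((tendsto_inv_atTop_nhds_zero_nat.const_mul a).add hpow).div_const c
    rw [mul_zero, add_zero, zero_div] at h
    refine h.congr' ?_
    filter_upwards [eventually_gt_atTop 0] with k hk
    rw [Real.rpow_sub_one (by positivity)]
    field_simp
  refine tendsto_of_tendsto_of_tendsto_of_le_of_le tendsto_const_nhds hlim
    (fun k => div_nonneg (tailProdSum_nonneg (fun s => sq_nonneg _) k) k.cast_nonneg)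
    fun k => div_le_div_of_nonneg_right (hbound k) k.cast_nonneg

theorem tendsto_tailProdSum_div_one (hc : 0 < c) (hca : c ≤ a) (hτ : 1 < τ) :
    Tendsto (fun k : ℕ => tailProdSum (fun s => (1 - c / (a + (s : ℝ) ^ τ)) ^ 2) k / k)
      atTop (𝓝 1) := by
  have hfac := fun s => one_sub_div_mem_Icc hc (le_add_rpow (τ := τ) hca s)
  refine tendsto_tailProdSum_div_self_of_summable (fun s => sq_nonneg _)
    (fun s => pow_le_one₀ (hfac s).1 (hfac s).2) ?_
  refine ((Real.summable_nat_rpow_inv.2 hτ).mul_left (2 * c)).of_norm_bounded_eventually_nat ?_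
  filter_upwards [eventually_gt_atTop 0] with s hs
  have hpow : 0 < (s : ℝ) ^ τ := by positivity
  have hx : 0 ≤ c / (a + (s : ℝ) ^ τ) := div_nonneg hc.le (hc.le.trans (le_add_rpow hca s))
  have hfar : c / (a + (s : ℝ) ^ τ) ≤ c * ((s : ℝ) ^ τ)⁻¹ := by
    rw [← div_eq_mul_inv]
    exact div_le_div_of_nonneg_left hc.le hpow (le_add_of_nonneg_left (hc.le.trans hca))
  rw [Real.norm_of_nonneg (sub_nonneg.2 (pow_le_one₀ (hfac s).1 (hfac s).2))]
  nlinarith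

theorem le_liminf_tailProdSum_div (hc : 0 < c) (hca : c ≤ a) :
    1 / (1 + 2 * c) ≤
      liminf (fun k : ℕ => tailProdSum (fun s => (1 - c / (a + s)) ^ 2) k / k) atTop := by
  have hfac := fun s : ℕ =>
    one_sub_div_mem_Icc hc (hca.trans (le_add_of_nonneg_right s.cast_nonneg))
  have hg0 : ∀ s : ℕ, 0 ≤ (1 - c / (a + s)) ^ 2 := fun s => sq_nonneg _
  have hbound := div_le_tailProdSum_of_one_sub_div_le (hc.le.trans hca)
    (by positivity : 0 ≤ 2 * c) hg0
    fun s => by rw [mul_div_assoc]; nlinarith [sq_nonneg (c / (a + s))]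
  have hlim :
      Tendsto (fun k : ℕ => (k - 2 * c) / (1 + 2 * c) / k) atTop (𝓝 (1 / (1 + 2 * c))) := by
    have h := ((tendsto_const_nhds (x := (1 : ℝ))).sub
      (tendsto_inv_atTop_nhds_zero_nat.const_mul (2 * c))).div_const (1 + 2 * c)
    rw [mul_zero, sub_zero] at h
    refine h.congr' ?_
    filter_upwards [eventually_gt_atTop 0] with k hk
    field_simp
  rw [← hlim.liminf_eq]
  refine liminf_le_liminf (Eventually.of_forall fun k =>
    div_le_div_of_nonneg_right (hbound k) k.cast_nonneg) hlim.isBoundedUnder_ge ?_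
  exact IsBoundedUnder.isCoboundedUnder_ge ⟨1, eventually_map.2 (Eventually.of_forall fun k =>
    div_le_one_of_le₀ (tailProdSum_le_natCast hg0 (fun s => pow_le_one₀ (hfac s).1 (hfac s).2) k)
      k.cast_nonneg)⟩

end Weights

/-- Behavior of `Z_β(k) = (1/k)·∑_{j=1}^k ∏_{s=j}^k (1 − λ·β_s)²` for the weight
sequence `β_s = b0/(a+s^τ)`: it tends to `0` if `τ < 1`, to `1` if `τ > 1`, and has
`liminf ≥ 1/(1+2b0λ)` if `τ = 1`. -/
theorem Zbeta_asymptotics (lam b0 a τ : ℝ) (hlam : 0 < lam) (hb0 : 0 < b0)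
    (ha : b0 * lam ≤ a) (hτ : 0 ≤ τ)
    (Z : ℕ → ℝ)
    (hZ : ∀ k : ℕ, Z k = (1 / (k : ℝ)) * ∑ j ∈ Finset.Icc 1 k,
        ∏ s ∈ Finset.Icc j k, (1 - lam * (b0 / (a + (s : ℝ) ^ τ))) ^ 2) :
    (τ < 1 → Tendsto Z atTop (nhds 0)) ∧
    (1 < τ → Tendsto Z atTop (nhds 1)) ∧
    (τ = 1 → 1 / (1 + 2 * b0 * lam) ≤ liminf Z atTop) := by
  have hc : 0 < b0 * lam := by positivity
  obtain rfl :
      Z = fun k : ℕ => tailProdSum (fun s => (1 - b0 * lam / (a + (s : ℝ) ^ τ)) ^ 2) k / k := by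
    funext k
    simp_rw [hZ, one_div_mul_eq_div, tailProdSum, mul_div_assoc', mul_comm lam b0]
  refine ⟨tendsto_tailProdSum_div_zero hc ha hτ, tendsto_tailProdSum_div_one hc ha, ?_⟩
  rintro rfl
  simpa [Real.rpow_one, mul_assoc] using le_liminf_tailProdSum_div hc ha
end

section
/- Let μ_k ∈ ℝ and σ_k > 0 for k ≥ 1, and let P_k be the Gaussian probability measure on ℝ with mean μ_k and variance σ_k². If the sequence (μ_k) is bounded and there exist τ ∈ (0,1), c > 0, and K such that σ_k² ≥ c/k^τ for all k ≥ K, then limsup_{k→∞} −(1/k)·log P_k((−∞, 0]) ≤ 0; that is, P_k((−∞,0]) cannot decay exponentially fast in k. -/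
/-!
On `[-√v, 0]` the density of `N(m, v)` is at least `exp (-(1 + m² / v)) / √(2π v)`, so
`P((-∞, 0]) ≥ exp (-(1 + m² / v)) / √(2π)` and `-log P((-∞, 0]) ≤ 1 + log √(2π) + m² / v`.
For bounded means and `v_k ≥ c / k^τ` the right-hand side is `O(k^τ) = o(k)`.
-/

open Filter Topology ProbabilityTheory MeasureTheory Real Set
open scoped NNReal

namespace ProbabilityTheory

lemma exp_neg_one_add_sq_div_le_gaussianPDFReal (m : ℝ) {v : ℝ≥0} (hv : v ≠ 0) {x : ℝ}
    (hx : x ∈ Icc (-√(v : ℝ)) 0) :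
    (√(2 * π * v))⁻¹ * exp (-(1 + m ^ 2 / v)) ≤ gaussianPDFReal m v x := by
  have hv_pos : (0 : ℝ) < v := by positivity
  have hx_sq : x ^ 2 ≤ v := by
    simpa using sq_le_sq' hx.1 (hx.2.trans (sqrt_nonneg _))
  rw [gaussianPDFReal]
  gcongr
  rw [neg_div, neg_le_neg_iff, div_le_iff₀ (by positivity)]
  calc (x - m) ^ 2 ≤ 2 * (v + m ^ 2) := by nlinarith [sq_nonneg (x + m)]
    _ = (1 + m ^ 2 / v) * (2 * v) := by field_simp

lemma exp_neg_one_add_sq_div_le_gaussianReal_Iic_zero (m : ℝ) {v : ℝ≥0} (hv : v ≠ 0) :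
    exp (-(1 + m ^ 2 / v)) / √(2 * π) ≤ (gaussianReal m v (Iic 0)).toReal := by
  set s := √(v : ℝ)
  have hs : 0 < s := sqrt_pos.2 (by positivity)
  have hsqrt : √(2 * π * v) = √(2 * π) * s := sqrt_mul (by positivity) _
  have hvol : volume.real (Icc (-s) 0) = s := by simp [measureReal_def, hs.le]
  rw [gaussianReal_apply_eq_integral m hv, ENNReal.toReal_ofReal
    (setIntegral_nonneg measurableSet_Iic fun x _ => gaussianPDFReal_nonneg m v x)]
  calc exp (-(1 + m ^ 2 / v)) / √(2 * π)
      = volume.real (Icc (-s) 0) • ((√(2 * π * v))⁻¹ * exp (-(1 + m ^ 2 / v))) := by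
        rw [hvol, hsqrt, smul_eq_mul]
        field_simp
    _ ≤ ∫ x in Icc (-s) 0, gaussianPDFReal m v x :=
        setIntegral_ge_of_const_le measurableSet_Icc (by simp)
          (fun x hx => exp_neg_one_add_sq_div_le_gaussianPDFReal m hv hx)
          (integrable_gaussianPDFReal m v).integrableOn
    _ ≤ ∫ x in Iic 0, gaussianPDFReal m v x :=
        setIntegral_mono_set (integrable_gaussianPDFReal m v).integrableOn
          (ae_of_all _ (gaussianPDFReal_nonneg m v)) (Eventually.of_forall fun x hx => hx.2)

lemma neg_log_gaussianReal_Iic_zero_le (m : ℝ) {v : ℝ≥0} (hv : v ≠ 0) :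
    -log (gaussianReal m v (Iic 0)).toReal ≤ 1 + log √(2 * π) + m ^ 2 / v := by
  have hlower := exp_neg_one_add_sq_div_le_gaussianReal_Iic_zero m hv
  have hpos : 0 < exp (-(1 + m ^ 2 / v)) / √(2 * π) := by positivity
  have hlog := log_le_log hpos hlower
  rw [log_div (exp_ne_zero _) (by positivity), log_exp] at hlog
  linarith

lemma neg_log_gaussianReal_Iic_zero_le_of_le {m M w v : ℝ} (hm : |m| ≤ M) (hw : 0 < w)
    (hwv : w ≤ v) :
    -log (gaussianReal m v.toNNReal (Iic 0)).toReal ≤ 1 + log √(2 * π) + M ^ 2 / w := by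
  have hv : 0 < v := hw.trans_le hwv
  have htail := neg_log_gaussianReal_Iic_zero_le m (Real.toNNReal_pos.2 hv).ne'
  rw [Real.coe_toNNReal _ hv.le] at htail
  have hmean : m ^ 2 / v ≤ M ^ 2 / w :=
    div_le_div₀ (sq_nonneg M) (sq_le_sq.2 (hm.trans (le_abs_self M))) hw hwv
  linarith

end ProbabilityTheory

lemma neg_log_toReal_measure_nonneg {α : Type*} [MeasurableSpace α] (P : Measure α)
    [IsProbabilityMeasure P] (s : Set α) : 0 ≤ -log (P s).toReal :=
  neg_nonneg.2 (log_nonpos ENNReal.toReal_nonneg measureReal_le_one)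

lemma tendsto_natCast_rpow_sub_one_atTop_zero {τ : ℝ} (hτ : τ < 1) :
    Tendsto (fun k : ℕ => (k : ℝ) ^ (τ - 1)) atTop (𝓝 0) := by
  have h : Tendsto (fun x : ℝ => x ^ (τ - 1)) atTop (𝓝 0) := by
    simpa using tendsto_rpow_neg_atTop (y := 1 - τ) (by linarith)
  exact h.comp tendsto_natCast_atTop_atTop

theorem gaussian_subexponential_decay_general (μ σ : ℕ → ℝ)
    (hbdd : ∃ M : ℝ, ∀ k, |μ k| ≤ M)
    (τ c : ℝ) (hτ1 : τ < 1) (hc : 0 < c) (K : ℕ)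
    (hvar : ∀ k : ℕ, K ≤ k → c / (k : ℝ) ^ τ ≤ σ k ^ 2) :
    limsup (fun k : ℕ =>
        -(1 / (k : ℝ)) *
          Real.log ((gaussianReal (μ k) ((σ k ^ 2).toNNReal)) (Set.Iic 0)).toReal) atTop ≤ 0 := by
  obtain ⟨M, hM⟩ := hbdd
  set g : ℕ → ℝ := fun k => (1 + log √(2 * π)) * (1 / k) + M ^ 2 / c * (k : ℝ) ^ (τ - 1)
  have hg : Tendsto g atTop (𝓝 0) := by
    simpa [g] using (tendsto_one_div_atTop_nhds_zero_nat.const_mul (1 + log √(2 * π))).add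
      ((tendsto_natCast_rpow_sub_one_atTop_zero hτ1).const_mul (M ^ 2 / c))
  have hnonneg (k : ℕ) : 0 ≤ -(1 / (k : ℝ)) *
      log (gaussianReal (μ k) (σ k ^ 2).toNNReal (Iic 0)).toReal := by
    rw [neg_mul_comm]
    exact mul_nonneg (by positivity) (neg_log_toReal_measure_nonneg _ _)
  have hle : ∀ᶠ k : ℕ in atTop, -(1 / (k : ℝ)) *
      log (gaussianReal (μ k) (σ k ^ 2).toNNReal (Iic 0)).toReal ≤ g k := by
    filter_upwards [eventually_ge_atTop K, eventually_gt_atTop 0] with k hkK hk0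
    have hk : (0 : ℝ) < k := by exact_mod_cast hk0
    calc -(1 / (k : ℝ)) * log (gaussianReal (μ k) (σ k ^ 2).toNNReal (Iic 0)).toReal
        = 1 / k * -log (gaussianReal (μ k) (σ k ^ 2).toNNReal (Iic 0)).toReal := by ring
      _ ≤ 1 / k * (1 + log √(2 * π) + M ^ 2 / (c / (k : ℝ) ^ τ)) :=
          mul_le_mul_of_nonneg_left
            (neg_log_gaussianReal_Iic_zero_le_of_le (hM k) (by positivity) (hvar k hkK))
            (by positivity)
      _ = g k := by simp only [g, rpow_sub_one hk.ne']; field_simp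
  exact (tendsto_of_tendsto_of_tendsto_of_le_of_le' tendsto_const_nhds hg
    (Eventually.of_forall hnonneg) hle).limsup_eq.le

/-- If a sequence of Gaussian measures has bounded means and variances decaying no
faster than `c/k^τ` with `τ ∈ (0,1)`, then the left-tail probabilities `P_k((−∞,0])`
cannot decay exponentially fast: `limsup −(1/k)·log P_k((−∞,0]) ≤ 0`. -/
theorem gaussian_subexponential_decay (μ σ : ℕ → ℝ) (hσ : ∀ k, 0 < σ k)
    (hbdd : ∃ M : ℝ, ∀ k, |μ k| ≤ M)
    (τ c : ℝ) (hτ0 : 0 < τ) (hτ1 : τ < 1) (hc : 0 < c) (K : ℕ)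
    (hvar : ∀ k : ℕ, K ≤ k → c / (k : ℝ) ^ τ ≤ σ k ^ 2) :
    limsup (fun k : ℕ =>
        -(1 / (k : ℝ)) *
          Real.log ((gaussianReal (μ k) ((σ k ^ 2).toNNReal)) (Set.Iic 0)).toReal) atTop ≤ 0 :=
  gaussian_subexponential_decay_general μ σ hbdd τ c hτ1 hc K hvar
end
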